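/- arXiv:1605.04573 — 6 statements merged into one kernel-verified Lean document; each statement's English description precedes it below -/
import Mathlib

section
/- Let G be a real symmetric 4×4 matrix with exactly one negative eigenvalue λ₀ < 0 and three positive eigenvalues λ₁, λ₂, λ₃ > 0. Let c > 0 and e ∈ ℝ⁴ satisfy e ⬝ (G e) = -1/c². Then for every nonzero z orthogonal to e (i.e. e ⬝ z = 0) one has z ⬝ (G⁻¹ z) > 0. -/
/-!
In the orthonormal eigenbasis both quadratic forms become weighted sums of squares:
`⟪e, G e⟫ = ∑ λᵢ aᵢ²` and `⟪z, G⁻¹ z⟫ = ∑ bᵢ² / λᵢ`, with `∑ aᵢ bᵢ = ⟪e, z⟫ = 0`.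
Negativity of the first sum means `∑_{i ≠ 0} λᵢ aᵢ² < -λ₀ a₀²`, and weighted Cauchy–Schwarz
on the positive eigenvalues gives
`(a₀ b₀)² = (∑_{i ≠ 0} aᵢ bᵢ)² ≤ (∑_{i ≠ 0} λᵢ aᵢ²)(∑_{i ≠ 0} bᵢ² / λᵢ)`.
Together these force `b₀² / (-λ₀) < ∑_{i ≠ 0} bᵢ² / λᵢ`.
-/

open Matrix Finset

theorem sum_sq_div_pos_of_sum_mul_sq_neg {ι : Type*} [Fintype ι] [DecidableEq ι]
    {lam a b : ι → ℝ} {i₀ : ι} (hneg : lam i₀ < 0) (hpos : ∀ i, i ≠ i₀ → 0 < lam i)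
    (ha : ∑ i, lam i * a i ^ 2 < 0) (hab : ∑ i, a i * b i = 0) (hb : b ≠ 0) :
    0 < ∑ i, b i ^ 2 / lam i := by
  set s := univ.erase i₀
  have hs : ∀ i ∈ s, 0 < lam i := fun i hi => hpos i (ne_of_mem_erase hi)
  set P := ∑ i ∈ s, lam i * a i ^ 2
  set Q := ∑ i ∈ s, b i ^ 2 / lam i
  have hf : ∀ i ∈ s, 0 ≤ lam i * a i ^ 2 := fun i hi => mul_nonneg (hs i hi).le (sq_nonneg _)
  have hg : ∀ i ∈ s, 0 ≤ b i ^ 2 / lam i := fun i hi => div_nonneg (sq_nonneg _) (hs i hi).le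
  have hP : 0 ≤ P := sum_nonneg hf
  have hQ : 0 ≤ Q := sum_nonneg hg
  rw [← add_sum_erase _ _ (mem_univ i₀)] at ha hab ⊢
  have hCS : (a i₀ * b i₀) ^ 2 ≤ P * Q := by
    rw [← neg_sq, ← eq_neg_of_add_eq_zero_right hab]
    refine sum_sq_le_sum_mul_sum_of_sq_le_mul s hf hg fun i hi => ?_
    have := (hs i hi).ne'
    field_simp
    rfl
  have ha₀ : a i₀ ≠ 0 := by
    rintro h
    rw [h] at ha
    linarith
  have hQpos : 0 < Q := by
    by_cases hb₀ : b i₀ = 0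
    · obtain ⟨j, hj⟩ := Function.ne_iff.mp hb
      have hj₀ : j ≠ i₀ := by rintro rfl; exact hj hb₀
      exact sum_pos' hg
        ⟨j, mem_erase.mpr ⟨hj₀, mem_univ j⟩, div_pos (pow_two_pos_of_ne_zero hj) (hpos j hj₀)⟩
    · refine hQ.lt_of_ne fun h => ?_
      rw [← h, mul_zero] at hCS
      exact hCS.not_gt (pow_two_pos_of_ne_zero (mul_ne_zero ha₀ hb₀))
  have hb₀ : b i₀ ^ 2 < -lam i₀ * Q := by
    refine lt_of_mul_lt_mul_left ?_ (sq_nonneg (a i₀))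
    calc a i₀ ^ 2 * b i₀ ^ 2 = (a i₀ * b i₀) ^ 2 := by ring
      _ ≤ P * Q := hCS
      _ < -lam i₀ * a i₀ ^ 2 * Q := mul_lt_mul_of_pos_right (by linarith) hQpos
      _ = a i₀ ^ 2 * (-lam i₀ * Q) := by ring
  have : -Q < b i₀ ^ 2 / lam i₀ := by rw [lt_div_iff_of_neg hneg]; linarith
  linarith

theorem dotProduct_transpose_mul_mul_mulVec {m n R : Type*} [Fintype m] [Fintype n]
    [CommSemiring R] (U : Matrix m n R) (M : Matrix m m R) (x y : n → R) :
    x ⬝ᵥ (Uᵀ * M * U) *ᵥ y = (U *ᵥ x) ⬝ᵥ M *ᵥ (U *ᵥ y) := by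
  rw [← mulVec_mulVec, ← mulVec_mulVec, dotProduct_mulVec, vecMul_transpose]

theorem dotProduct_diagonal_mulVec_self {n R : Type*} [Fintype n] [DecidableEq n]
    [CommSemiring R] (d x : n → R) : x ⬝ᵥ diagonal d *ᵥ x = ∑ i, d i * x i ^ 2 := by
  simp only [dotProduct, mulVec_diagonal]
  exact sum_congr rfl fun i _ => by ring

section Eigenbasis

variable {ι : Type*} [Fintype ι] [DecidableEq ι] {G : Matrix ι ι ℝ} {lam : ι → ℝ} {u : ι → ι → ℝ}

theorem of_mul_transpose_of_orthonormal
    (horth : ∀ k l, u k ⬝ᵥ u l = if k = l then (1 : ℝ) else 0) : of u * (of u)ᵀ = 1 := by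
  ext k l
  simpa [mul_apply, one_apply, dotProduct] using horth k l

theorem eq_transpose_mul_diagonal_mul_of_eigenbasis
    (horth : ∀ k l, u k ⬝ᵥ u l = if k = l then (1 : ℝ) else 0)
    (heig : ∀ k, G *ᵥ u k = lam k • u k) : G = (of u)ᵀ * diagonal lam * of u := by
  have hcols : G * (of u)ᵀ = (of u)ᵀ * diagonal lam := by
    ext j k
    rw [mul_diagonal]
    simpa [mul_apply, mulVec, dotProduct, mul_comm] using congrFun (heig k) j
  rw [← hcols, mul_assoc, mul_eq_one_comm.mp (of_mul_transpose_of_orthonormal horth), mul_one]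

theorem inv_eq_transpose_mul_diagonal_inv_mul_of_eigenbasis
    (horth : ∀ k l, u k ⬝ᵥ u l = if k = l then (1 : ℝ) else 0)
    (heig : ∀ k, G *ᵥ u k = lam k • u k) (hlam : ∀ k, lam k ≠ 0) :
    G⁻¹ = (of u)ᵀ * diagonal lam⁻¹ * of u := by
  have hU := of_mul_transpose_of_orthonormal horth
  have hD : diagonal lam * diagonal lam⁻¹ = 1 := by
    rw [diagonal_mul_diagonal, ← diagonal_one]
    exact congrArg diagonal (funext fun k => mul_inv_cancel₀ (hlam k))
  refine inv_eq_right_inv ?_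
  rw [eq_transpose_mul_diagonal_mul_of_eigenbasis horth heig]
  calc (of u)ᵀ * diagonal lam * of u * ((of u)ᵀ * diagonal lam⁻¹ * of u)
      = (of u)ᵀ * (diagonal lam * (of u * (of u)ᵀ) * diagonal lam⁻¹) * of u := by noncomm_ring
    _ = 1 := by rw [hU, mul_one, hD, mul_one, mul_eq_one_comm.mp hU]

theorem dotProduct_inv_mulVec_pos_of_dotProduct_eq_zero {i₀ : ι}
    (horth : ∀ k l, u k ⬝ᵥ u l = if k = l then (1 : ℝ) else 0)
    (heig : ∀ k, G *ᵥ u k = lam k • u k)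
    (hneg : lam i₀ < 0) (hpos : ∀ i, i ≠ i₀ → 0 < lam i)
    {e z : ι → ℝ} (he : e ⬝ᵥ G *ᵥ e < 0) (hz : z ≠ 0) (hez : e ⬝ᵥ z = 0) :
    0 < z ⬝ᵥ G⁻¹ *ᵥ z := by
  have hU := mul_eq_one_comm.mp (of_mul_transpose_of_orthonormal horth)
  have hlam : ∀ k, lam k ≠ 0 := fun k => by
    by_cases hk : k = i₀
    · exact hk ▸ hneg.ne
    · exact (hpos k hk).ne'
  have hUz : of u *ᵥ z ≠ 0 := fun h => hz <| by
    rw [← one_mulVec z, ← hU, ← mulVec_mulVec, h, mulVec_zero]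
  have hUeUz : (of u *ᵥ e) ⬝ᵥ (of u *ᵥ z) = 0 := by
    rw [← hez, ← one_mulVec (of u *ᵥ z), ← dotProduct_transpose_mul_mul_mulVec, mul_one, hU,
      one_mulVec]
  rw [eq_transpose_mul_diagonal_mul_of_eigenbasis horth heig, dotProduct_transpose_mul_mul_mulVec,
    dotProduct_diagonal_mulVec_self] at he
  rw [inv_eq_transpose_mul_diagonal_inv_mul_of_eigenbasis horth heig hlam,
    dotProduct_transpose_mul_mul_mulVec, dotProduct_diagonal_mulVec_self]
  simpa only [Pi.inv_apply, inv_mul_eq_div] using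
    sum_sq_div_pos_of_sum_mul_sq_neg hneg hpos he hUeUz hUz

end Eigenbasis

theorem stmt4_general (G : Matrix (Fin 4) (Fin 4) ℝ)
    (lam : Fin 4 → ℝ) (u : Fin 4 → Fin 4 → ℝ)
    (horth : ∀ k l, u k ⬝ᵥ u l = if k = l then (1 : ℝ) else 0)
    (heig : ∀ k, G.mulVec (u k) = lam k • u k)
    (hneg : lam 0 < 0) (hpos : ∀ i : Fin 4, i ≠ 0 → 0 < lam i)
    (c : ℝ) (hc : 0 < c) (e : Fin 4 → ℝ)
    (he : e ⬝ᵥ G.mulVec e = -1 / c ^ 2) :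
    ∀ z : Fin 4 → ℝ, z ≠ 0 → e ⬝ᵥ z = 0 →
      0 < z ⬝ᵥ G⁻¹.mulVec z := by
  have he_neg : e ⬝ᵥ G *ᵥ e < 0 := he ▸ div_neg_of_neg_of_pos (by norm_num) (by positivity)
  exact fun z hz hez =>
    dotProduct_inv_mulVec_pos_of_dotProduct_eq_zero horth heig hneg hpos he_neg hz hez

theorem stmt4 (G : Matrix (Fin 4) (Fin 4) ℝ) (hGsymm : G.IsSymm)
    (lam : Fin 4 → ℝ) (u : Fin 4 → Fin 4 → ℝ)
    (horth : ∀ k l, u k ⬝ᵥ u l = if k = l then (1 : ℝ) else 0)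
    (heig : ∀ k, G.mulVec (u k) = lam k • u k)
    (hneg : lam 0 < 0) (hpos : ∀ i : Fin 4, i ≠ 0 → 0 < lam i)
    (c : ℝ) (hc : 0 < c) (e : Fin 4 → ℝ)
    (he : e ⬝ᵥ G.mulVec e = -1 / c ^ 2) :
    ∀ z : Fin 4 → ℝ, z ≠ 0 → e ⬝ᵥ z = 0 →
      0 < z ⬝ᵥ G⁻¹.mulVec z :=
  stmt4_general G lam u horth heig hneg hpos c hc e he
end

section
/- Let c > 0 and G_c := diag(-1/c², 1, 1, 1). For V ∈ ℝ³ with |V| < c, γ := (1 - |V|²/c²)^{-1/2}, Q ∈ SO(3), define B_c(V) := Id + (γ²/(c²(γ+1))) V Vᵀ and the Lorentz matrix L_c(V,Q) as the 4×4 block matrix with entries L₀₀ = γ, L₀ⱼ = (γ/c²)(VᵀQ)ⱼ, Lᵢ₀ = γ Vᵢ, Lᵢⱼ = (B_c(V)Q)ᵢⱼ. Then L_c(V,Q) · G_c · L_c(V,Q)ᵀ = G_c. -/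
open Matrix

noncomputable def gammaV (c : ℝ) (V : Fin 3 → ℝ) : ℝ :=
  1 / Real.sqrt (1 - (∑ i, V i ^ 2) / c ^ 2)

noncomputable def Bc (c : ℝ) (V : Fin 3 → ℝ) : Matrix (Fin 3) (Fin 3) ℝ :=
  1 + (gammaV c V ^ 2 / (c ^ 2 * (gammaV c V + 1))) • vecMulVec V V

noncomputable def Lc (c : ℝ) (V : Fin 3 → ℝ) (Q : Matrix (Fin 3) (Fin 3) ℝ) :
    Matrix (Fin 1 ⊕ Fin 3) (Fin 1 ⊕ Fin 3) ℝ :=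
  fromBlocks (of fun _ _ => gammaV c V)
             (of fun _ j => (gammaV c V / c ^ 2) * (V ᵥ* Q) j)
             (of fun i _ => gammaV c V * V i)
             (Bc c V * Q)

noncomputable def Gc (c : ℝ) : Matrix (Fin 1 ⊕ Fin 3) (Fin 1 ⊕ Fin 3) ℝ :=
  fromBlocks (of fun _ _ => -1 / c ^ 2) 0 0 1

/-!
`L_c(V, Q)` factors as the boost `L_c(V, 1)` followed by the rotation `diag(1, Q)`. The rotation
preserves `G_c` because `Q Qᵀ = 1`. For the boost, everything reduces to two properties of
`B_c(V)`: `B_c(V) V = γ V` and `B_c(V)² = 1 + (γ²/c²) V Vᵀ`, both consequences of the defining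
identity `γ² (c² - |V|²) = c²` of the Lorentz factor.
-/

section
variable {R n : Type*} [CommRing R] [Fintype n] [DecidableEq n] (k : R) (v : n → R)

theorem one_add_smul_vecMulVec_self_mulVec :
    (1 + k • vecMulVec v v) *ᵥ v = (1 + k * (v ⬝ᵥ v)) • v := by
  rw [add_mulVec, one_mulVec, smul_mulVec, vecMulVec_mulVec, op_smul_eq_smul, smul_smul,
    add_smul, one_smul]

theorem one_add_smul_vecMulVec_self_mul_self :
    (1 + k • vecMulVec v v) * (1 + k • vecMulVec v v) =
      1 + (2 * k + k ^ 2 * (v ⬝ᵥ v)) • vecMulVec v v := by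
  simp only [Matrix.add_mul, Matrix.mul_add, Matrix.one_mul, Matrix.mul_one, Matrix.smul_mul,
    Matrix.mul_smul, vecMulVec_mul_vecMulVec, vecMulVec_smul, smul_smul]
  module

end

theorem sum_sq_eq_dotProduct_self {R n : Type*} [CommSemiring R] [Fintype n] (v : n → R) :
    ∑ i, v i ^ 2 = v ⬝ᵥ v := by
  simp only [dotProduct, sq]

theorem ne_zero_of_dotProduct_self_lt_sq {n : Type*} [Fintype n] {c : ℝ} {v : n → ℝ}
    (hv : v ⬝ᵥ v < c ^ 2) : c ≠ 0 := by
  rintro rfl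
  exact (dotProduct_self_star_nonneg v).not_gt (by simpa using hv)

theorem Bc_transpose (c : ℝ) (V : Fin 3 → ℝ) : (Bc c V)ᵀ = Bc c V := by
  rw [Bc, transpose_add, transpose_smul, transpose_one, transpose_vecMulVec]

theorem Lc_one_eq (c : ℝ) (V : Fin 3 → ℝ) :
    Lc c V 1 = fromBlocks (of fun _ _ => gammaV c V)
      (replicateRow (Fin 1) ((gammaV c V / c ^ 2) • V)) (replicateCol (Fin 1) (gammaV c V • V))
      (Bc c V) := by
  rw [Lc, vecMul_one, Matrix.mul_one]
  rfl

theorem Lc_eq_Lc_one_mul (c : ℝ) (V : Fin 3 → ℝ) (Q : Matrix (Fin 3) (Fin 3) ℝ) :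
    Lc c V Q = Lc c V 1 * fromBlocks 1 0 0 Q := by
  rw [Lc_one_eq, fromBlocks_multiply]
  simp only [Matrix.mul_zero, Matrix.mul_one, add_zero, zero_add]
  rw [← replicateRow_vecMul, smul_vecMul]
  rfl

theorem fromBlocks_one_mul_Gc_mul_transpose (c : ℝ) {Q : Matrix (Fin 3) (Fin 3) ℝ}
    (hQ : Q * Qᵀ = 1) : fromBlocks 1 0 0 Q * Gc c * (fromBlocks 1 0 0 Q)ᵀ = Gc c := by
  rw [Gc, fromBlocks_transpose, fromBlocks_multiply, fromBlocks_multiply]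
  simp [hQ]

section
variable {c : ℝ} {V : Fin 3 → ℝ}

theorem one_sub_dotProduct_self_div_pos (hV : V ⬝ᵥ V < c ^ 2) : 0 < 1 - V ⬝ᵥ V / c ^ 2 := by
  have := ne_zero_of_dotProduct_self_lt_sq hV
  rwa [sub_pos, div_lt_one (by positivity)]

theorem gammaV_pos (hV : V ⬝ᵥ V < c ^ 2) : 0 < gammaV c V := by
  have := one_sub_dotProduct_self_div_pos hV
  rw [gammaV, sum_sq_eq_dotProduct_self]
  positivity

theorem gammaV_sq_mul_sub (hV : V ⬝ᵥ V < c ^ 2) : gammaV c V ^ 2 * (c ^ 2 - V ⬝ᵥ V) = c ^ 2 := by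
  have hc := pow_ne_zero 2 (ne_zero_of_dotProduct_self_lt_sq hV)
  have hx := one_sub_dotProduct_self_div_pos hV
  rw [gammaV, sum_sq_eq_dotProduct_self, div_pow, one_pow, Real.sq_sqrt hx.le,
    one_div_mul_eq_div, div_eq_iff hx.ne', mul_one_sub, mul_div_cancel₀ _ hc]

theorem Bc_mulVec_self (hV : V ⬝ᵥ V < c ^ 2) : Bc c V *ᵥ V = gammaV c V • V := by
  have hc := ne_zero_of_dotProduct_self_lt_sq hV
  have hγ := gammaV_pos hV
  have h := gammaV_sq_mul_sub hV
  rw [Bc, one_add_smul_vecMulVec_self_mulVec]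
  congr 1
  field_simp
  linear_combination -h

theorem Bc_vecMul_self (hV : V ⬝ᵥ V < c ^ 2) : V ᵥ* Bc c V = gammaV c V • V := by
  rw [← mulVec_transpose, Bc_transpose, Bc_mulVec_self hV]

theorem Bc_mul_self (hV : V ⬝ᵥ V < c ^ 2) :
    Bc c V * Bc c V = 1 + (gammaV c V ^ 2 / c ^ 2) • vecMulVec V V := by
  have hc := ne_zero_of_dotProduct_self_lt_sq hV
  have hγ := gammaV_pos hV
  have h := gammaV_sq_mul_sub hV
  rw [Bc, one_add_smul_vecMulVec_self_mul_self]
  congr 2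
  field_simp
  linear_combination -h

theorem Lc_one_mul_Gc_mul_transpose (hV : V ⬝ᵥ V < c ^ 2) :
    Lc c V 1 * Gc c * (Lc c V 1)ᵀ = Gc c := by
  have hc := ne_zero_of_dotProduct_self_lt_sq hV
  have h := gammaV_sq_mul_sub hV
  rw [Lc_one_eq, Gc, fromBlocks_transpose, fromBlocks_multiply, fromBlocks_multiply,
    transpose_replicateRow, transpose_replicateCol, Bc_transpose]
  simp only [Matrix.mul_zero, add_zero, zero_add, Matrix.mul_one]
  rw [replicateRow_mul_replicateCol, smul_dotProduct, dotProduct_smul, ← replicateRow_vecMul,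
    smul_vecMul, Bc_vecMul_self hV, ← replicateCol_mulVec, mulVec_smul, Bc_mulVec_self hV,
    Bc_mul_self hV]
  congr 1 <;> ext i j <;>
    simp only [Matrix.add_apply, mul_apply, Finset.univ_unique, Finset.sum_singleton, of_apply,
      transpose_apply, replicateRow_apply, replicateCol_apply, Matrix.smul_apply, Pi.smul_apply,
      vecMulVec_apply, smul_eq_mul, Matrix.zero_apply] <;>
    field_simp
  case e_A => linear_combination -h
  all_goals ring

end

theorem stmt5_general (c : ℝ) (V : Fin 3 → ℝ)
    (hV : Real.sqrt (∑ i, V i ^ 2) < c)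
    (Q : Matrix (Fin 3) (Fin 3) ℝ) (hQ : Qᵀ * Q = 1) :
    Lc c V Q * Gc c * (Lc c V Q)ᵀ = Gc c := by
  have hV' : V ⬝ᵥ V < c ^ 2 := sum_sq_eq_dotProduct_self V ▸ Real.lt_sq_of_sqrt_lt hV
  rw [Lc_eq_Lc_one_mul, transpose_mul]
  calc Lc c V 1 * fromBlocks 1 0 0 Q * Gc c * ((fromBlocks 1 0 0 Q)ᵀ * (Lc c V 1)ᵀ)
      = Lc c V 1 * (fromBlocks 1 0 0 Q * Gc c * (fromBlocks 1 0 0 Q)ᵀ) * (Lc c V 1)ᵀ := by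
        simp only [Matrix.mul_assoc]
    _ = Gc c := by
      rw [fromBlocks_one_mul_Gc_mul_transpose c (mul_eq_one_comm.mp hQ),
        Lc_one_mul_Gc_mul_transpose hV']

theorem stmt5 (c : ℝ) (hc : 0 < c) (V : Fin 3 → ℝ)
    (hV : Real.sqrt (∑ i, V i ^ 2) < c)
    (Q : Matrix (Fin 3) (Fin 3) ℝ) (hQ : Qᵀ * Q = 1) (hdetQ : Q.det = 1) :
    Lc c V Q * Gc c * (Lc c V Q)ᵀ = Gc c :=
  stmt5_general c V hV Q hQ
end

section
/- In the setting of dual bases (eₖ), (eₖ') with G⁻¹ = -c² e₀'e₀'ᵀ + Σᵢ eᵢ'eᵢ'ᵀ: let v ∈ ℝ⁴ satisfy e₀' ⬝ v = 1 and ‖v‖_W < c, where ‖v‖_W² = Σ_{i=1}^{3}(eᵢ' ⬝ v)². Define γ_v := (1 - ‖v‖_W²/c²)^{-1/2} and u := γ_v • v. Then u ⬝ (G⁻¹ u) = -c². -/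
/-! The quadratic form of `G⁻¹` at `v` is `‖v‖_W² - c²`, because `e₀' ⬝ v = 1`; rescaling by `γ_v`
multiplies it by `γ_v² = c² / (c² - ‖v‖_W²)`. -/

open Matrix Finset

noncomputable def spaceNorm (e' : Fin 4 → Fin 4 → ℝ) (w : Fin 4 → ℝ) : ℝ :=
  Real.sqrt (∑ i ∈ Finset.univ.filter (fun i : Fin 4 => i ≠ 0), (e' i ⬝ᵥ w) ^ 2)

theorem dotProduct_sum_smul_vecMulVec_self_mulVec {ι n R : Type*} [Fintype n] [CommRing R]
    (s : Finset ι) (w : ι → R) (a : ι → n → R) (v : n → R) :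
    v ⬝ᵥ (∑ k ∈ s, w k • vecMulVec (a k) (a k)) *ᵥ v = ∑ k ∈ s, w k * (a k ⬝ᵥ v) ^ 2 := by
  simp only [sum_mulVec, dotProduct_sum, smul_mulVec, dotProduct_smul, vecMulVec_mulVec,
    op_smul_eq_smul, smul_eq_mul, dotProduct_comm v (a _), sq]

theorem spaceNorm_sq (e' : Fin 4 → Fin 4 → ℝ) (w : Fin 4 → ℝ) :
    spaceNorm e' w ^ 2 = ∑ i ∈ univ.erase 0, (e' i ⬝ᵥ w) ^ 2 := by
  rw [spaceNorm, Real.sq_sqrt (by positivity), filter_ne']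

theorem spaceNorm_nonneg (e' : Fin 4 → Fin 4 → ℝ) (w : Fin 4 → ℝ) : 0 ≤ spaceNorm e' w :=
  Real.sqrt_nonneg _

theorem lorentzFactor_sq_mul {s c : ℝ} (hs : 0 ≤ s) (hsc : s < c) :
    1 / √(1 - s ^ 2 / c ^ 2) * (1 / √(1 - s ^ 2 / c ^ 2)) * (s ^ 2 - c ^ 2) = -c ^ 2 := by
  have hc : 0 < c := hs.trans_lt hsc
  have hpos : 0 < 1 - s ^ 2 / c ^ 2 := by
    rw [sub_pos, div_lt_one (by positivity)]
    exact pow_lt_pow_left₀ hsc hs two_ne_zero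
  rw [div_mul_div_comm, one_mul, Real.mul_self_sqrt hpos.le, one_div_mul_eq_div,
    div_eq_iff hpos.ne']
  field_simp
  ring

theorem stmt8_general (c : ℝ)
    (e' : Fin 4 → Fin 4 → ℝ)
    (Ginv : Matrix (Fin 4) (Fin 4) ℝ)
    (hGinv : Ginv = ∑ k : Fin 4,
      (if k = 0 then -c ^ 2 else 1) • vecMulVec (e' k) (e' k))
    (v : Fin 4 → ℝ)
    (hv0 : e' 0 ⬝ᵥ v = 1) (hvc : spaceNorm e' v < c) :
    ((1 / Real.sqrt (1 - (spaceNorm e' v) ^ 2 / c ^ 2)) • v) ⬝ᵥ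
      Ginv.mulVec ((1 / Real.sqrt (1 - (spaceNorm e' v) ^ 2 / c ^ 2)) • v)
    = -c ^ 2 := by
  have hquad : v ⬝ᵥ Ginv *ᵥ v = spaceNorm e' v ^ 2 - c ^ 2 := by
    rw [hGinv, dotProduct_sum_smul_vecMulVec_self_mulVec, ← add_sum_erase _ _ (mem_univ 0),
      spaceNorm_sq, hv0]
    have hspace : ∀ k ∈ univ.erase (0 : Fin 4), (if k = 0 then -c ^ 2 else 1) * (e' k ⬝ᵥ v) ^ 2
        = (e' k ⬝ᵥ v) ^ 2 := fun k hk => by rw [if_neg (ne_of_mem_erase hk), one_mul]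
    rw [sum_congr rfl hspace, if_pos rfl]
    ring
  rw [smul_dotProduct, mulVec_smul, dotProduct_smul, hquad, smul_eq_mul, smul_eq_mul,
    ← mul_assoc, lorentzFactor_sq_mul (spaceNorm_nonneg e' v) hvc]

theorem stmt8 (c : ℝ) (hc : 0 < c)
    (e e' : Fin 4 → Fin 4 → ℝ)
    (hbasis : LinearIndependent ℝ e)
    (hdual : ∀ k l, e' k ⬝ᵥ e l = if k = l then (1 : ℝ) else 0)
    (Ginv : Matrix (Fin 4) (Fin 4) ℝ)
    (hGinv : Ginv = ∑ k : Fin 4,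
      (if k = 0 then -c ^ 2 else 1) • vecMulVec (e' k) (e' k))
    (v : Fin 4 → ℝ)
    (hv0 : e' 0 ⬝ᵥ v = 1) (hvc : spaceNorm e' v < c) :
    ((1 / Real.sqrt (1 - (spaceNorm e' v) ^ 2 / c ^ 2)) • v) ⬝ᵥ
      Ginv.mulVec ((1 / Real.sqrt (1 - (spaceNorm e' v) ^ 2 / c ^ 2)) • v)
    = -c ^ 2 :=
  stmt8_general c e' Ginv hGinv v hv0 hvc
end

section
/- Let e : ℝ⁴ → ℝ⁴, v : ℝ⁴ → ℝ⁴ be C¹ with e ⬝ v ≡ 1, and let Gr : ℝ⁴ → Matrix (Fin 4) (Fin 4) ℝ be a C¹ symmetric matrix field with (Gr)ᵀ e = 0, i.e. Σᵢ eᵢ Grᵢₖ = 0 for all k. Define S := (Dv)Gr + ((Dv)Gr)ᵀ - (v ⬝ ∇)Gr, i.e. Sᵢⱼ = Σₖ(∂ₖvᵢ Grₖⱼ + ∂ₖvⱼ Grₖᵢ) - Σₖ vₖ ∂ₖGrᵢⱼ. Then for each j: Σᵢ eᵢ Sᵢⱼ = Σ_{i,k} (∂ₖ eᵢ)(vₖ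 Grᵢⱼ - vᵢ Grₖⱼ); moreover the vector J with Jⱼ := Σᵢ eᵢ Sᵢⱼ satisfies e ⬝ J = 0. -/
open Matrix

private lemma deriv_sum_mul_const
    (f g : (Fin 4 → ℝ) → Fin 4 → ℝ) (c : ℝ)
    (hf : ∀ i, Differentiable ℝ fun y => f y i)
    (hg : ∀ i, Differentiable ℝ fun y => g y i)
    (h : ∀ y, (∑ i : Fin 4, f y i * g y i) = c) (y w : Fin 4 → ℝ) :
    ∑ i : Fin 4, (fderiv ℝ (fun z => f z i) y w * g y i
      + f y i * fderiv ℝ (fun z => g z i) y w) = 0 := by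
  have h1 : HasFDerivAt (fun z => ∑ i : Fin 4, f z i * g z i)
      (∑ i : Fin 4, (f y i • fderiv ℝ (fun z => g z i) y
        + g y i • fderiv ℝ (fun z => f z i) y)) y :=
    HasFDerivAt.fun_sum fun i _ =>
      ((hf i y).hasFDerivAt.mul ((hg i y).hasFDerivAt))
  have h2 : HasFDerivAt (fun z => ∑ i : Fin 4, f z i * g z i)
      (0 : (Fin 4 → ℝ) →L[ℝ] ℝ) y := by
    rw [show (fun z => ∑ i : Fin 4, f z i * g z i) = fun _ => c from funext h]
    exact hasFDerivAt_const c y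
  have h3 := congrArg (fun L : (Fin 4 → ℝ) →L[ℝ] ℝ => L w) (h1.unique h2)
  simp only [ContinuousLinearMap.sum_apply, ContinuousLinearMap.add_apply,
    ContinuousLinearMap.smul_apply, ContinuousLinearMap.zero_apply, smul_eq_mul] at h3
  rw [show (∑ i : Fin 4, (fderiv ℝ (fun z => f z i) y w * g y i
      + f y i * fderiv ℝ (fun z => g z i) y w))
    = ∑ i : Fin 4, (f y i * fderiv ℝ (fun z => g z i) y w
      + g y i * fderiv ℝ (fun z => f z i) y w)
    from Finset.sum_congr rfl fun i _ => by ring]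
  exact h3

theorem stmt16 (e v : (Fin 4 → ℝ) → (Fin 4 → ℝ))
    (Gr : (Fin 4 → ℝ) → Matrix (Fin 4) (Fin 4) ℝ)
    (he : ∀ i, ContDiff ℝ 1 (fun y => e y i))
    (hv : ∀ i, ContDiff ℝ 1 (fun y => v y i))
    (hGr : ∀ i j, ContDiff ℝ 1 (fun y => Gr y i j))
    (hGrsymm : ∀ y i j, Gr y i j = Gr y j i)
    (hev : ∀ y, (∑ i : Fin 4, e y i * v y i) = 1)
    (heGr : ∀ y (k : Fin 4), (∑ i : Fin 4, e y i * Gr y i k) = 0)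
    (S : (Fin 4 → ℝ) → Matrix (Fin 4) (Fin 4) ℝ)
    (hS : ∀ y i j, S y i j
      = (∑ k : Fin 4, fderiv ℝ (fun z => v z i) y (Pi.single k 1) * Gr y k j)
        + (∑ k : Fin 4, fderiv ℝ (fun z => v z j) y (Pi.single k 1) * Gr y k i)
        - ∑ k : Fin 4, v y k * fderiv ℝ (fun z => Gr z i j) y (Pi.single k 1)) :
    (∀ y (j : Fin 4), ∑ i : Fin 4, e y i * S y i j
      = ∑ i : Fin 4, ∑ k : Fin 4,
          fderiv ℝ (fun z => e z i) y (Pi.single k 1)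
            * (v y k * Gr y i j - v y i * Gr y k j)) ∧
    (∀ y : Fin 4 → ℝ,
      ∑ j : Fin 4, e y j * (∑ i : Fin 4, e y i * S y i j) = 0) := by
  have hde : ∀ i, Differentiable ℝ fun y => e y i := fun i => (he i).differentiable one_ne_zero
  have hdv : ∀ i, Differentiable ℝ fun y => v y i := fun i => (hv i).differentiable one_ne_zero
  have hdG : ∀ i j, Differentiable ℝ fun y => Gr y i j :=
    fun i j => (hGr i j).differentiable one_ne_zero
  have hA : ∀ (y w : Fin 4 → ℝ), ∑ i : Fin 4, (fderiv ℝ (fun z => e z i) y w * v y i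
      + e y i * fderiv ℝ (fun z => v z i) y w) = 0 :=
    fun y w => deriv_sum_mul_const e v 1 hde hdv hev y w
  have hB : ∀ (j : Fin 4) (y w : Fin 4 → ℝ),
      ∑ i : Fin 4, (fderiv ℝ (fun z => e z i) y w * Gr y i j
        + e y i * fderiv ℝ (fun z => Gr z i j) y w) = 0 :=
    fun j y w => deriv_sum_mul_const e (fun y i => Gr y i j) 0 hde
      (fun i => hdG i j) (fun y => heGr y j) y w
  have hC : ∀ (y : Fin 4 → ℝ) (a : Fin 4), ∑ i : Fin 4, e y i * Gr y a i = 0 := by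
    intro y a
    rw [← heGr y a]
    exact Finset.sum_congr rfl fun i _ => by rw [hGrsymm]
  have h1 : ∀ y (j : Fin 4), ∑ i : Fin 4, e y i * S y i j
      = ∑ i : Fin 4, ∑ k : Fin 4,
          fderiv ℝ (fun z => e z i) y (Pi.single k 1)
            * (v y k * Gr y i j - v y i * Gr y k j) := by
    intro y j
    have A0 := hA y (Pi.single 0 1); have A1 := hA y (Pi.single 1 1)
    have A2 := hA y (Pi.single 2 1); have A3 := hA y (Pi.single 3 1)
    have B0 := hB j y (Pi.single 0 1); have B1 := hB j y (Pi.single 1 1)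
    have B2 := hB j y (Pi.single 2 1); have B3 := hB j y (Pi.single 3 1)
    have C0 := hC y 0; have C1 := hC y 1; have C2 := hC y 2; have C3 := hC y 3
    simp only [Fin.sum_univ_four] at A0 A1 A2 A3 B0 B1 B2 B3 C0 C1 C2 C3
    simp only [hS, Fin.sum_univ_four]
    linear_combination Gr y 0 j * A0 + Gr y 1 j * A1 + Gr y 2 j * A2 + Gr y 3 j * A3 + fderiv ℝ (fun z => v z j) y (Pi.single 0 1) * C0 + fderiv ℝ (fun z => v z j) y (Pi.single 1 1) * C1 + fderiv ℝ (fun z => v z j) y (Pi.single 2 1) * C2 + fderiv ℝ (fun z => v z j) y (Pi.single 3 1) * C3 - v y 0 * B0 - v y 1 * B1 - v y 2 * B2 - v y 3 * B3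
  refine ⟨h1, fun y => ?_⟩
  have C0 := hC y 0; have C1 := hC y 1; have C2 := hC y 2; have C3 := hC y 3
  simp only [Fin.sum_univ_four] at C0 C1 C2 C3
  simp only [h1, Fin.sum_univ_four]
  linear_combination ((fderiv ℝ (fun z => e z 0) y (Pi.single 0 1) * v y 0 + fderiv ℝ (fun z => e z 0) y (Pi.single 1 1) * v y 1 + fderiv ℝ (fun z => e z 0) y (Pi.single 2 1) * v y 2 + fderiv ℝ (fun z => e z 0) y (Pi.single 3 1) * v y 3) - (fderiv ℝ (fun z => e z 0) y (Pi.single 0 1) * v y 0 + fderiv ℝ (fun z => e z 1) y (Pi.single 0 1) * v y 1 + fderiv ℝ (fun z => e z 2) y (Pi.single 0 1) * v y 2 + fderiv ℝ (fun z => e z 3) y (Pi.single 0 1) * v y 3)) * C0 + ((fderiv ℝ (fun z => e z 1) y (Pi.single 0 1) * v y 0 + fderiv ℝ (fun z => e z 1) y (Pi.single 1 1) * v y 1 + fderiv ℝ (fun z => e z 1) y (Pi.single 2 1) * v y 2 + fderiv ℝ (fun z => e z 1) y (Pi.single 3 1) * v y 3) - (fderiv ℝ (fun z => e z 0) y (Pi.single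 1 1) * v y 0 + fderiv ℝ (fun z => e z 1) y (Pi.single 1 1) * v y 1 + fderiv ℝ (fun z => e z 2) y (Pi.single 1 1) * v y 2 + fderiv ℝ (fun z => e z 3) y (Pi.single 1 1) * v y 3)) * C1 + ((fderiv ℝ (fun z => e z 2) y (Pi.single 0 1) * v y 0 + fderiv ℝ (fun z => e z 2) y (Pi.single 1 1) * v y 1 + fderiv ℝ (fun z => e z 2) y (Pi.single 2 1) * v y 2 + fderiv ℝ (fun z => e z 2) y (Pi.single 3 1) * v y 3) - (fderiv ℝ (fun z => e z 0) y (Pi.single 2 1) * v y 0 + fderiv ℝ (fun z => e z 1) y (Pi.single 2 1) * v y 1 + fderiv ℝ (fun z => e z 2) y (Pi.single 2 1) * v y 2 + fderiv ℝ (fun z => e z 3) y (Pi.single 2 1) * v y 3)) * C2 + ((fderiv ℝ (fun z => e z 3) y (Pi.single 0 1) * v y 0 + fderiv ℝ (fun z => e z 3) y (Pi.single 1 1) * v y 1 + fderiv ℝ (fun z => e z 3) y (Pi.single 2 1) * v y 2 + fderiv ℝ (fun z => e z 3) y (Pi.single 3 1) * v y 3) - (fderiv ℝ (fun z => e z 0)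 y (Pi.single 3 1) * v y 0 + fderiv ℝ (fun z => e z 1) y (Pi.single 3 1) * v y 1 + fderiv ℝ (fun z => e z 2) y (Pi.single 3 1) * v y 2 + fderiv ℝ (fun z => e z 3) y (Pi.single 3 1) * v y 3)) * C3
end

section
/- Let U* ⊆ ℝⁿ⁺¹ be open, Y : U* → U = Y(U*) a C² diffeomorphism with J := det DY > 0, Z : U* → GL(M+1, ℝ) a C¹ matrix field. Suppose q^k : U → ℝⁿ⁺¹ and r^k : U → ℝ (k = 0..M) and q*^l, r*^l on U* are related by qᵏᵢ ∘ Y = (1/J) Σ_{j,l} Y_{i,j} Z_{kl} q*ˡⱼ and rᵏ ∘ Y = (1/J)(Σ_{j,l} ∂ⱼZ_{kl} q*ˡⱼ + Σₗ Z_{kl} r*ˡ). Then for every compactly supported C¹ test family ζ : U → ℝ^{M+1} with ζ* := Zᵀ (ζ ∘ Y): Σₗ ∫_{U*} (Σⱼ ∂ⱼζ*ₗ · q*ˡⱼ + ζ*ₗ r*ˡ) = Σₖ ∫_U (Σᵢ ∂ᵢζₖ · qᵏᵢ + ζₖ rᵏ). (Invariance of weak divergence systems under observer transformations.) -/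
/-!
Substitute `x = Y y` in the integral over `U`: the Jacobian `J` of the change of variables cancels
the factor `1 / J` in the transformation rules for `q` and `r`. By the chain and product rules,
`∂ⱼζ*ₗ = ∑ₖ (Z_{kl} ∑ᵢ ∂ⱼYᵢ (∂ᵢζₖ ∘ Y) + (ζₖ ∘ Y) ∂ⱼZ_{kl})`, and after exchanging finite sums the
two integrands agree pointwise on `U*`.
-/

open Matrix MeasureTheory Finset

theorem ContinuousLinearMap.apply_eq_sum_mul_apply_single {ι 𝕜 : Type*} [Fintype ι]
    [DecidableEq ι] [Semiring 𝕜] [TopologicalSpace 𝕜] (L : (ι → 𝕜) →L[𝕜] 𝕜) (v : ι → 𝕜) :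
    L v = ∑ i, v i * L (Pi.single i 1) := by
  conv_lhs => rw [← univ_sum_single v, map_sum]
  refine sum_congr rfl fun i _ => ?_
  rw [← smul_eq_mul, ← L.map_smul, ← Pi.single_smul' i (v i) (1 : 𝕜), smul_eq_mul, mul_one]

section PartialDerivatives

variable {𝕜 ι κ μ : Type*} [NontriviallyNormedField 𝕜] [Fintype ι] [DecidableEq ι]
  {Y : (ι → 𝕜) → κ → 𝕜} {y : ι → 𝕜}

theorem toMatrix'_fderiv_apply (hY : DifferentiableAt 𝕜 Y y) (i : κ) (j : ι) :
    LinearMap.toMatrix' (fderiv 𝕜 Y y : (ι → 𝕜) →ₗ[𝕜] κ → 𝕜) i j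
      = fderiv 𝕜 (fun z => Y z i) y (Pi.single j 1) := by
  rw [fderiv_apply hY]; rfl

theorem comp_fderiv_apply_single [Fintype κ] [DecidableEq κ] (L : (κ → 𝕜) →L[𝕜] 𝕜)
    (hY : DifferentiableAt 𝕜 Y y) (j : ι) :
    (L.comp (fderiv 𝕜 Y y)) (Pi.single j 1)
      = ∑ i, fderiv 𝕜 (fun z => Y z i) y (Pi.single j 1) * L (Pi.single i 1) := by
  rw [ContinuousLinearMap.comp_apply, ContinuousLinearMap.apply_eq_sum_mul_apply_single]
  simp only [fderiv_apply hY, ContinuousLinearMap.comp_apply, ContinuousLinearMap.proj_apply]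

theorem fderiv_transpose_mulVec_comp_apply_single [Fintype κ] [DecidableEq κ] [Fintype μ]
    {Z : (ι → 𝕜) → Matrix μ μ 𝕜} {ζ : (κ → 𝕜) → μ → 𝕜}
    (hY : DifferentiableAt 𝕜 Y y) (hZ : ∀ k l, DifferentiableAt 𝕜 (fun z => Z z k l) y)
    (hζ : ∀ k, DifferentiableAt 𝕜 (fun x => ζ x k) (Y y)) (l : μ) (j : ι) :
    fderiv 𝕜 (fun z => ((Z z)ᵀ *ᵥ ζ (Y z)) l) y (Pi.single j 1)
      = ∑ k, (Z y k l * ∑ i, fderiv 𝕜 (fun z => Y z i) y (Pi.single j 1) *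
            fderiv 𝕜 (fun x => ζ x k) (Y y) (Pi.single i 1)
          + ζ (Y y) k * fderiv 𝕜 (fun z => Z z k l) y (Pi.single j 1)) := by
  have hζY : ∀ k, HasFDerivAt (fun z => ζ (Y z) k)
      ((fderiv 𝕜 (fun x => ζ x k) (Y y)).comp (fderiv 𝕜 Y y)) y :=
    fun k => (hζ k).hasFDerivAt.comp y hY.hasFDerivAt
  have hsum := HasFDerivAt.fun_sum (u := univ) fun k _ => (hZ k l).hasFDerivAt.fun_mul (hζY k)
  simp only [mulVec, dotProduct, transpose_apply]
  rw [hsum.fderiv, _root_.sum_apply]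
  refine sum_congr rfl fun k _ => ?_
  simp only [_root_.add_apply, _root_.smul_apply, smul_eq_mul]
  rw [comp_fderiv_apply_single _ hY]

end PartialDerivatives

section FiniteSums

variable {ι κ R : Type*} [Fintype ι] [Fintype κ] [CommSemiring R]
  (D : ι → ι → R) (Z : κ → κ → R) (dZ : κ → κ → ι → R)
  (a : κ → ι → R) (b : κ → R) (Q : κ → ι → R) (S : κ → R)

theorem transformed_integrand_eq :
    ∑ l, (∑ j, (∑ k, (Z k l * ∑ i, D i j * a k i + b k * dZ k l j)) * Q l j
        + (∑ k, b k * Z k l) * S l)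
      = ∑ k, (∑ i, a k i * ∑ j, ∑ l, D i j * Z k l * Q l j
        + b k * (∑ j, ∑ l, dZ k l j * Q l j + ∑ l, Z k l * S l)) := by
  simp only [sum_mul, mul_sum, sum_add_distrib, mul_add, add_mul, add_assoc]
  congr 1
  · rw [sum_comm_cycle]
    refine sum_congr rfl fun k _ => ?_
    rw [sum_comm_cycle]
    refine sum_congr rfl fun i _ => ?_
    rw [sum_comm]
    exact sum_congr rfl fun j _ => sum_congr rfl fun l _ => by ring
  congr 1
  · rw [sum_comm_cycle]
    refine sum_congr rfl fun k _ => ?_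
    rw [sum_comm]
    exact sum_congr rfl fun j _ => sum_congr rfl fun l _ => by ring
  · rw [sum_comm]
    exact sum_congr rfl fun k _ => sum_congr rfl fun l _ => by ring

theorem transformed_integrand_eq_mul (c : R) (q : κ → ι → R) (r : κ → R)
    (hq : ∀ k i, c * q k i = ∑ j, ∑ l, D i j * Z k l * Q l j)
    (hr : ∀ k, c * r k = ∑ j, ∑ l, dZ k l j * Q l j + ∑ l, Z k l * S l) :
    ∑ l, (∑ j, (∑ k, (Z k l * ∑ i, D i j * a k i + b k * dZ k l j)) * Q l j
        + (∑ k, b k * Z k l) * S l)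
      = c * ∑ k, (∑ i, a k i * q k i + b k * r k) := by
  rw [transformed_integrand_eq, mul_sum]
  refine sum_congr rfl fun k _ => ?_
  simp only [mul_add, mul_sum, mul_left_comm c, hq, hr]

end FiniteSums

theorem stmt18_general (n M : ℕ)
    (Ustar U : Set (Fin (n + 1) → ℝ)) (hUstar : IsOpen Ustar)
    (Y : (Fin (n + 1) → ℝ) → (Fin (n + 1) → ℝ))
    (hYsmooth : ContDiffOn ℝ 2 Y Ustar)
    (hYimage : Y '' Ustar = U) (hYinj : Set.InjOn Y Ustar)
    (DY : (Fin (n + 1) → ℝ) → Matrix (Fin (n + 1)) (Fin (n + 1)) ℝ)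
    (hDY : ∀ y i j, DY y i j = fderiv ℝ (fun z => Y z i) y (Pi.single j 1))
    (J : (Fin (n + 1) → ℝ) → ℝ) (hJ : ∀ y, J y = (DY y).det)
    (hJpos : ∀ y ∈ Ustar, 0 < J y)
    (Z : (Fin (n + 1) → ℝ) → Matrix (Fin (M + 1)) (Fin (M + 1)) ℝ)
    (hZ : ∀ k l, ContDiff ℝ 1 (fun y => Z y k l))
    (q : Fin (M + 1) → (Fin (n + 1) → ℝ) → (Fin (n + 1) → ℝ))
    (r : Fin (M + 1) → (Fin (n + 1) → ℝ) → ℝ)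
    (qstar : Fin (M + 1) → (Fin (n + 1) → ℝ) → (Fin (n + 1) → ℝ))
    (rstar : Fin (M + 1) → (Fin (n + 1) → ℝ) → ℝ)
    (hqrel : ∀ y ∈ Ustar, ∀ (k : Fin (M + 1)) (i : Fin (n + 1)),
      q k (Y y) i = (1 / J y) * ∑ j : Fin (n + 1), ∑ l : Fin (M + 1),
        DY y i j * Z y k l * qstar l y j)
    (hrrel : ∀ y ∈ Ustar, ∀ k : Fin (M + 1),
      r k (Y y) = (1 / J y) *
        ((∑ j : Fin (n + 1), ∑ l : Fin (M + 1),
          fderiv ℝ (fun z => Z z k l) y (Pi.single j 1) * qstar l y j)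
         + ∑ l : Fin (M + 1), Z y k l * rstar l y))
    (ζ : (Fin (n + 1) → ℝ) → (Fin (M + 1) → ℝ))
    (hζ : ∀ k, ContDiff ℝ 1 (fun y => ζ y k))
    (ζstar : (Fin (n + 1) → ℝ) → (Fin (M + 1) → ℝ))
    (hζstar : ∀ y, ζstar y = (Z y)ᵀ.mulVec (ζ (Y y))) :
    ∫ y in Ustar, (∑ l : Fin (M + 1),
        ((∑ j : Fin (n + 1),
          fderiv ℝ (fun z => ζstar z l) y (Pi.single j 1) * qstar l y j)
         + ζstar y l * rstar l y))
    = ∫ y in U, (∑ k : Fin (M + 1),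
        ((∑ i : Fin (n + 1),
          fderiv ℝ (fun z => ζ z k) y (Pi.single i 1) * q k y i)
         + ζ y k * r k y)) := by
  obtain rfl : ζstar = fun y => (Z y)ᵀ *ᵥ ζ (Y y) := funext hζstar
  have hYdiff : ∀ y ∈ Ustar, DifferentiableAt ℝ Y y := fun y hy =>
    (hYsmooth.differentiableOn (by norm_num)).differentiableAt (hUstar.mem_nhds hy)
  rw [← hYimage, integral_image_eq_integral_abs_det_fderiv_smul volume hUstar.measurableSet
    (fun y hy => (hYdiff y hy).hasFDerivAt.hasFDerivWithinAt) hYinj]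
  refine setIntegral_congr_fun hUstar.measurableSet fun y hy => ?_
  have hdet : (fderiv ℝ Y y).det = J y := by
    have hDYy : DY y = LinearMap.toMatrix' (fderiv ℝ Y y : _ →ₗ[ℝ] _) :=
      Matrix.ext fun i j => by rw [hDY, toMatrix'_fderiv_apply (hYdiff y hy)]
    rw [hJ, hDYy, LinearMap.det_toMatrix']
  have hJy : J y ≠ 0 := (hJpos y hy).ne'
  simp only [fderiv_transpose_mulVec_comp_apply_single (hYdiff y hy)
    (fun k l => (hZ k l).differentiable one_ne_zero y)
    (fun k => (hζ k).differentiable one_ne_zero (Y y)), hdet, abs_of_pos (hJpos y hy), smul_eq_mul]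
  simp only [← hDY, mulVec_transpose, vecMul, dotProduct]
  refine transformed_integrand_eq_mul (DY y) (Z y)
    (fun k l j => fderiv ℝ (fun z => Z z k l) y (Pi.single j 1))
    (fun k i => fderiv ℝ (fun z => ζ z k) (Y y) (Pi.single i 1)) (ζ (Y y))
    (fun l j => qstar l y j) (fun l => rstar l y) (J y) (fun k i => q k (Y y) i)
    (fun k => r k (Y y)) (fun k i => ?_) (fun k => ?_)
  · rw [hqrel y hy, one_div, mul_inv_cancel_left₀ hJy]
  · rw [hrrel y hy, one_div, mul_inv_cancel_left₀ hJy]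

theorem stmt18 (n M : ℕ)
    (Ustar U : Set (Fin (n + 1) → ℝ)) (hUstar : IsOpen Ustar) (hU : IsOpen U)
    (Y : (Fin (n + 1) → ℝ) → (Fin (n + 1) → ℝ))
    (hYsmooth : ContDiffOn ℝ 2 Y Ustar)
    (hYimage : Y '' Ustar = U) (hYinj : Set.InjOn Y Ustar)
    (DY : (Fin (n + 1) → ℝ) → Matrix (Fin (n + 1)) (Fin (n + 1)) ℝ)
    (hDY : ∀ y i j, DY y i j = fderiv ℝ (fun z => Y z i) y (Pi.single j 1))
    (J : (Fin (n + 1) → ℝ) → ℝ) (hJ : ∀ y, J y = (DY y).det)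
    (hJpos : ∀ y ∈ Ustar, 0 < J y)
    (Z : (Fin (n + 1) → ℝ) → Matrix (Fin (M + 1)) (Fin (M + 1)) ℝ)
    (hZ : ∀ k l, ContDiff ℝ 1 (fun y => Z y k l))
    (hZinv : ∀ y, IsUnit (Z y).det)
    (q : Fin (M + 1) → (Fin (n + 1) → ℝ) → (Fin (n + 1) → ℝ))
    (r : Fin (M + 1) → (Fin (n + 1) → ℝ) → ℝ)
    (qstar : Fin (M + 1) → (Fin (n + 1) → ℝ) → (Fin (n + 1) → ℝ))
    (rstar : Fin (M + 1) → (Fin (n + 1) → ℝ) → ℝ)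
    (hqcont : ∀ k i, Continuous (fun y => q k y i))
    (hrcont : ∀ k, Continuous (r k))
    (hqstarcont : ∀ l j, Continuous (fun y => qstar l y j))
    (hrstarcont : ∀ l, Continuous (rstar l))
    (hqrel : ∀ y ∈ Ustar, ∀ (k : Fin (M + 1)) (i : Fin (n + 1)),
      q k (Y y) i = (1 / J y) * ∑ j : Fin (n + 1), ∑ l : Fin (M + 1),
        DY y i j * Z y k l * qstar l y j)
    (hrrel : ∀ y ∈ Ustar, ∀ k : Fin (M + 1),
      r k (Y y) = (1 / J y) *
        ((∑ j : Fin (n + 1), ∑ l : Fin (M + 1),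
          fderiv ℝ (fun z => Z z k l) y (Pi.single j 1) * qstar l y j)
         + ∑ l : Fin (M + 1), Z y k l * rstar l y))
    (ζ : (Fin (n + 1) → ℝ) → (Fin (M + 1) → ℝ))
    (hζ : ∀ k, ContDiff ℝ 1 (fun y => ζ y k))
    (hζsupp : HasCompactSupport ζ) (hζU : tsupport ζ ⊆ U)
    (ζstar : (Fin (n + 1) → ℝ) → (Fin (M + 1) → ℝ))
    (hζstar : ∀ y, ζstar y = (Z y)ᵀ.mulVec (ζ (Y y))) :
    ∫ y in Ustar, (∑ l : Fin (M + 1),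
        ((∑ j : Fin (n + 1),
          fderiv ℝ (fun z => ζstar z l) y (Pi.single j 1) * qstar l y j)
         + ζstar y l * rstar l y))
    = ∫ y in U, (∑ k : Fin (M + 1),
        ((∑ i : Fin (n + 1),
          fderiv ℝ (fun z => ζ z k) y (Pi.single i 1) * q k y i)
         + ζ y k * r k y)) :=
  stmt18_general n M Ustar U hUstar Y hYsmooth hYimage hYinj DY hDY J hJ hJpos Z hZ q r qstar rstar
    hqrel hrrel ζ hζ ζstar hζstar
end

section
/- Let f : ℝ × ℝ³ × ℝ³ → ℝ be a rapidly decaying (in c) nonnegative measurable function, m > 0, and define for indices k₁,…,k_M ∈ {0,1,2,3} the moments F_{k₁⋯k_M}(t,x) := ∫_{ℝ³} m ĉ_{k₁}⋯ĉ_{k_M} f(t,x,c) dc, where ĉ := (1, c) ∈ ℝ⁴. Let Y(t*, x*) = (t* + a, Q(t*)x* + b(t*)) be a Galilean-type transformation (Q(t*) ∈ SO(3), b smooth) with Jacobian DY = [[1, 0], [Ẋ, Q]], and let f*(t*, x*, c*) := f(t, x, c) under (t, x, c) = (t*+a, Q x* + b, Ẋ + Q c*) where Ẋ(t*,x*) =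 Q̇(t*)x* + ḃ(t*). Define F* from f* analogously. Then F_{k₁⋯k_M}(Y(t*,x*)) = Σ_{\bar k₁,…,\bar k_M} (DY)_{k₁\bar k₁} ⋯ (DY)_{k_M\bar k_M} F*_{\bar k₁⋯\bar k_M}(t*, x*), i.e. the moment hierarchy transforms as a contravariant M-tensor. -/
/-!
Write `ĉ = (1, c)`. The velocity substitution `c = Ẋ + Q c*` is affine, and lifts to the linear
relation `ĉ = DY ĉ*`, so each product `ĉ_{k₁} ⋯ ĉ_{k_M}` expands multilinearly into
`∑ DY_{k₁ k̄₁} ⋯ DY_{k_M k̄_M} ĉ*_{k̄₁} ⋯ ĉ*_{k̄_M}`. Since `Q` is orthogonal, the substitution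
preserves Lebesgue measure, and integrating term by term gives the tensor law. Integrability of
the starred moments comes from running the same expansion backwards, with the inverse
substitution `c* = Qᵀ (c - Ẋ)`.
-/

open Matrix MeasureTheory

section LinearAlgebra

variable {R κ σ : Type*} [CommSemiring R] [Fintype κ] [Fintype σ] [DecidableEq σ]

theorem Matrix.prod_mulVec_apply (N : Matrix κ κ R) (v : κ → R) (k : σ → κ) :
    ∏ i, (N *ᵥ v) (k i) = ∑ kb : σ → κ, (∏ i, N (k i) (kb i)) * ∏ i, v (kb i) := by
  simp only [mulVec, dotProduct, Fintype.prod_sum, Finset.prod_mul_distrib]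

theorem Matrix.abs_det_eq_one_of_transpose_mul_self {ι : Type*} [Fintype ι] [DecidableEq ι]
    {A : Matrix ι ι ℝ} (hA : Aᵀ * A = 1) : |A.det| = 1 := by
  have h : A.det ^ 2 = 1 := by
    simpa [det_mul, det_transpose, sq] using congrArg det hA
  rwa [← sq_abs, pow_eq_one_iff_of_nonneg (abs_nonneg _) two_ne_zero] at h

end LinearAlgebra

section OrthogonalSubstitution

variable {ι : Type*} [Fintype ι] [DecidableEq ι] {A : Matrix ι ι ℝ}

theorem measurePreserving_mulVec_of_transpose_mul_self (hA : Aᵀ * A = 1) :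
    MeasurePreserving (A *ᵥ ·) (volume : Measure (ι → ℝ)) volume := by
  have hdet := abs_det_eq_one_of_transpose_mul_self hA
  refine ⟨(toLin' A).continuous_on_pi.measurable, ?_⟩
  rw [show (A *ᵥ ·) = ⇑(toLin' A) from rfl,
    Real.map_matrix_volume_pi_eq_smul_volume_pi (abs_ne_zero.mp (hdet ▸ one_ne_zero)),
    abs_inv, hdet]
  simp

noncomputable def orthogonalAffineEquiv (w : ι → ℝ) (hA : Aᵀ * A = 1) :
    (ι → ℝ) ≃ᵐ (ι → ℝ) where
  toFun c := w + A *ᵥ c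
  invFun c := Aᵀ *ᵥ (c - w)
  left_inv c := by simp [mulVec_mulVec, hA]
  right_inv c := by simp [mulVec_mulVec, mul_eq_one_comm.mp hA]
  measurable_toFun := by
    change Measurable fun c => w + A *ᵥ c
    fun_prop
  measurable_invFun := by
    change Measurable fun c => Aᵀ *ᵥ (c - w)
    fun_prop

theorem measurePreserving_orthogonalAffineEquiv (w : ι → ℝ) (hA : Aᵀ * A = 1) :
    MeasurePreserving (orthogonalAffineEquiv w hA) volume volume :=
  (measurePreserving_add_left volume w).comp (measurePreserving_mulVec_of_transpose_mul_self hA)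

variable {E : Type*} [NormedAddCommGroup E]

theorem integrable_comp_orthogonalAffine_iff (w : ι → ℝ) (hA : Aᵀ * A = 1)
    (g : (ι → ℝ) → E) : Integrable (fun c => g (w + A *ᵥ c)) ↔ Integrable g :=
  (measurePreserving_orthogonalAffineEquiv w hA).integrable_comp_emb
    (orthogonalAffineEquiv w hA).measurableEmbedding

theorem integral_comp_orthogonalAffine [NormedSpace ℝ E] (w : ι → ℝ) (hA : Aᵀ * A = 1)
    (g : (ι → ℝ) → E) : ∫ c, g (w + A *ᵥ c) = ∫ c, g c :=
  (measurePreserving_orthogonalAffineEquiv w hA).integral_comp' g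

end OrthogonalSubstitution

section Moments

variable {ι σ : Type*} [Fintype ι] [Fintype σ] [DecidableEq σ]

/-- The extended velocity `ĉ = (1, c)`. -/
def augment (c : ι → ℝ) : Fin 1 ⊕ ι → ℝ := Sum.elim (fun _ => 1) c

def affineBlock (w : ι → ℝ) (A : Matrix ι ι ℝ) : Matrix (Fin 1 ⊕ ι) (Fin 1 ⊕ ι) ℝ :=
  fromBlocks (of fun _ _ => 1) 0 (of fun i _ => w i) A

theorem augment_add_mulVec (w c : ι → ℝ) (A : Matrix ι ι ℝ) :
    augment (w + A *ᵥ c) = affineBlock w A *ᵥ augment c := by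
  ext (j | i) <;> simp [augment, affineBlock, mulVec, dotProduct]

noncomputable def moment (g : (ι → ℝ) → ℝ) (k : σ → Fin 1 ⊕ ι) : ℝ :=
  ∫ c, (∏ i, augment c (k i)) * g c

theorem integrable_prod_mulVec_mul {α κ : Type*} [MeasurableSpace α] {μ : Measure α} [Fintype κ]
    {v : α → κ → ℝ} {g : α → ℝ} (h : ∀ k : σ → κ, Integrable (fun x => (∏ i, v x (k i)) * g x) μ)
    (N : Matrix κ κ ℝ) (k : σ → κ) :
    Integrable (fun x => (∏ i, (N *ᵥ v x) (k i)) * g x) μ := by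
  simp_rw [prod_mulVec_apply, Finset.sum_mul, mul_assoc]
  exact integrable_finsetSum _ fun kb _ => (h kb).const_mul _

variable [DecidableEq ι] {A : Matrix ι ι ℝ} {g : (ι → ℝ) → ℝ}

theorem integrable_moment_comp_orthogonalAffine (w : ι → ℝ) (hA : Aᵀ * A = 1)
    (hg : ∀ k : σ → Fin 1 ⊕ ι, Integrable fun c => (∏ i, augment c (k i)) * g c)
    (k : σ → Fin 1 ⊕ ι) :
    Integrable fun c => (∏ i, augment c (k i)) * g (w + A *ᵥ c) := by
  have hinv : ∀ c, augment c = affineBlock (-(Aᵀ *ᵥ w)) Aᵀ *ᵥ augment (w + A *ᵥ c) := by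
    intro c
    rw [← augment_add_mulVec, mulVec_add, mulVec_mulVec, hA, one_mulVec, neg_add_cancel_left]
  refine ((integrable_comp_orthogonalAffine_iff w hA _).2
    (integrable_prod_mulVec_mul hg (affineBlock (-(Aᵀ *ᵥ w)) Aᵀ) k)).congr (ae_of_all _ fun c => ?_)
  dsimp only
  rw [← hinv c]

theorem moment_eq_sum_moment_comp_orthogonalAffine (w : ι → ℝ) (hA : Aᵀ * A = 1)
    (hg : ∀ k : σ → Fin 1 ⊕ ι, Integrable fun c => (∏ i, augment c (k i)) * g c)
    (k : σ → Fin 1 ⊕ ι) :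
    moment g k
      = ∑ kb, (∏ i, affineBlock w A (k i) (kb i)) * moment (fun c => g (w + A *ᵥ c)) kb := by
  rw [moment, ← integral_comp_orthogonalAffine w hA]
  simp_rw [augment_add_mulVec, prod_mulVec_apply, Finset.sum_mul, mul_assoc]
  rw [integral_finsetSum _ fun kb _ =>
    (integrable_moment_comp_orthogonalAffine w hA hg kb).const_mul _]
  exact Finset.sum_congr rfl fun kb _ => integral_const_mul _ _

end Moments

theorem stmt19_general (f : ℝ × (Fin 3 → ℝ) × (Fin 3 → ℝ) → ℝ)
    (m : ℝ) (M : ℕ)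
    (chat : (Fin 3 → ℝ) → (Fin 1 ⊕ Fin 3) → ℝ)
    (hchat : ∀ c, chat c = Sum.elim (fun _ => (1 : ℝ)) c)
    (a : ℝ) (Q : ℝ → Matrix (Fin 3) (Fin 3) ℝ)
    (hQorth : ∀ t, (Q t)ᵀ * Q t = 1)
    (b : ℝ → (Fin 3 → ℝ))
    (Xdot : ℝ → (Fin 3 → ℝ) → (Fin 3 → ℝ))
    (DY : ℝ → (Fin 3 → ℝ) → Matrix (Fin 1 ⊕ Fin 3) (Fin 1 ⊕ Fin 3) ℝ)
    (hDY : ∀ t x, DY t x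
      = fromBlocks (of fun _ _ => 1) 0 (of fun i _ => Xdot t x i) (Q t))
    (fstar : ℝ × (Fin 3 → ℝ) × (Fin 3 → ℝ) → ℝ)
    (hfstar : ∀ t x c, fstar (t, x, c)
      = f (t + a, (Q t).mulVec x + b t, Xdot t x + (Q t).mulVec c))
    (hInt : ∀ (t : ℝ) (x : Fin 3 → ℝ) (k : Fin M → (Fin 1 ⊕ Fin 3)),
      Integrable (fun c : Fin 3 → ℝ => m * (∏ i, chat c (k i)) * f (t, x, c)))
    (F Fstar : (Fin M → (Fin 1 ⊕ Fin 3)) → ℝ → (Fin 3 → ℝ) → ℝ)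
    (hF : ∀ k t x, F k t x = ∫ c : Fin 3 → ℝ, m * (∏ i, chat c (k i)) * f (t, x, c))
    (hFstar : ∀ k t x, Fstar k t x
      = ∫ c : Fin 3 → ℝ, m * (∏ i, chat c (k i)) * fstar (t, x, c)) :
    ∀ (k : Fin M → (Fin 1 ⊕ Fin 3)) (tstar : ℝ) (xstar : Fin 3 → ℝ),
      F k (tstar + a) ((Q tstar).mulVec xstar + b tstar)
      = ∑ kb : Fin M → (Fin 1 ⊕ Fin 3),
          (∏ i, DY tstar xstar (k i) (kb i)) * Fstar kb tstar xstar := by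
  have hchat_mul : ∀ (g : (Fin 3 → ℝ) → ℝ) (k : Fin M → Fin 1 ⊕ Fin 3) c,
      m * (∏ i, chat c (k i)) * g c = (∏ i, augment c (k i)) * (m * g c) := by
    intro g k c
    rw [hchat, augment]
    ring
  have hmoment : ∀ (g : (Fin 3 → ℝ) → ℝ) (k : Fin M → Fin 1 ⊕ Fin 3),
      ∫ c, m * (∏ i, chat c (k i)) * g c = moment (fun c => m * g c) k :=
    fun g k => integral_congr_ae (ae_of_all _ (hchat_mul g k))
  intro k t x
  have hint : ∀ k : Fin M → Fin 1 ⊕ Fin 3,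
      Integrable fun c => (∏ i, augment c (k i)) * (m * f (t + a, Q t *ᵥ x + b t, c)) :=
    fun k => (hInt (t + a) (Q t *ᵥ x + b t) k).congr (ae_of_all _ (hchat_mul _ k))
  simp only [hF, hFstar, hfstar, hmoment, hDY]
  exact moment_eq_sum_moment_comp_orthogonalAffine (Xdot t x) (hQorth t) hint k

theorem stmt19 (f : ℝ × (Fin 3 → ℝ) × (Fin 3 → ℝ) → ℝ)
    (hfmeas : Measurable f) (hfnonneg : ∀ p, 0 ≤ f p)
    (m : ℝ) (hm : 0 < m) (M : ℕ)
    (chat : (Fin 3 → ℝ) → (Fin 1 ⊕ Fin 3) → ℝ)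
    (hchat : ∀ c, chat c = Sum.elim (fun _ => (1 : ℝ)) c)
    (a : ℝ) (Q : ℝ → Matrix (Fin 3) (Fin 3) ℝ)
    (hQorth : ∀ t, (Q t)ᵀ * Q t = 1) (hQdet : ∀ t, (Q t).det = 1)
    (hQdiff : ∀ i j, Differentiable ℝ (fun t => Q t i j))
    (b : ℝ → (Fin 3 → ℝ)) (hb : Differentiable ℝ b)
    (Xdot : ℝ → (Fin 3 → ℝ) → (Fin 3 → ℝ))
    (hXdot : ∀ t x, Xdot t x
      = (of fun i j => deriv (fun s => Q s i j) t).mulVec x + deriv b t)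
    (DY : ℝ → (Fin 3 → ℝ) → Matrix (Fin 1 ⊕ Fin 3) (Fin 1 ⊕ Fin 3) ℝ)
    (hDY : ∀ t x, DY t x
      = fromBlocks (of fun _ _ => 1) 0 (of fun i _ => Xdot t x i) (Q t))
    (fstar : ℝ × (Fin 3 → ℝ) × (Fin 3 → ℝ) → ℝ)
    (hfstar : ∀ t x c, fstar (t, x, c)
      = f (t + a, (Q t).mulVec x + b t, Xdot t x + (Q t).mulVec c))
    (hInt : ∀ (t : ℝ) (x : Fin 3 → ℝ) (k : Fin M → (Fin 1 ⊕ Fin 3)),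
      Integrable (fun c : Fin 3 → ℝ => m * (∏ i, chat c (k i)) * f (t, x, c)))
    (F Fstar : (Fin M → (Fin 1 ⊕ Fin 3)) → ℝ → (Fin 3 → ℝ) → ℝ)
    (hF : ∀ k t x, F k t x = ∫ c : Fin 3 → ℝ, m * (∏ i, chat c (k i)) * f (t, x, c))
    (hFstar : ∀ k t x, Fstar k t x
      = ∫ c : Fin 3 → ℝ, m * (∏ i, chat c (k i)) * fstar (t, x, c)) :
    ∀ (k : Fin M → (Fin 1 ⊕ Fin 3)) (tstar : ℝ) (xstar : Fin 3 → ℝ),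
      F k (tstar + a) ((Q tstar).mulVec xstar + b tstar)
      = ∑ kb : Fin M → (Fin 1 ⊕ Fin 3),
          (∏ i, DY tstar xstar (k i) (kb i)) * Fstar kb tstar xstar :=
  stmt19_general f m M chat hchat a Q hQorth b Xdot DY hDY fstar hfstar hInt F Fstar hF hFstar
end
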